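/- Let g : ℝ → ℝ be a bounded function supported in (a,b) with 0 < a < b, let N be a natural number and α₀ ∈ ℝ, and set g_N(r,α) = sin(Nα + α₀) g(r). Then there is a constant C depending only on (a,b) such that for all r > b, the radial component of the SQG velocity satisfies |v_r(g_N)(r,α)| ≤ C ‖g‖_{L^∞}/(N |r−b|²). -/

import Mathlib

open MeasureTheory Real Set
open scoped ENNReal
noncomputable section

abbrev V2 := ℝ × ℝ

def nrm (x : V2) : ℝ := Real.sqrt (x.1 ^ 2 + x.2 ^ 2)

def pd1 (f : V2 → ℝ) (x : V2) : ℝ := deriv (fun t => f (t, x.2)) x.1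
def pd2 (f : V2 → ℝ) (x : V2) : ℝ := deriv (fun t => f (x.1, t)) x.2
def pdm (j k : ℕ) (f : V2 → ℝ) : V2 → ℝ := pd1^[j] (pd2^[k] f)

def l2N (f : V2 → ℝ) : ℝ := Real.sqrt (∫ x : V2, f x ^ 2)

def hkN (k : ℕ) (f : V2 → ℝ) : ℝ :=
  ∑ i ∈ Finset.range (k + 1), ∑ j ∈ Finset.range (i + 1), l2N (pdm j (i - j) f)

def ckN (k : ℕ) (f : V2 → ℝ) : ℝ :=
  ∑ i ∈ Finset.range (k + 1), ∑ j ∈ Finset.range (i + 1), ⨆ x : V2, |pdm j (i - j) f x|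

def sqgVel (θ : V2 → ℝ) (x : V2) : V2 :=
  ∫ y : V2, (θ y / nrm (x.1 - y.1, x.2 - y.2) ^ 3) • ((-(x.2 - y.2), x.1 - y.1) : V2)

def IsSQGSol (θ : ℝ → V2 → ℝ) (I : Set ℝ) : Prop :=
  ∀ t ∈ I, ∀ x : V2, HasDerivAt (fun s => θ s x)
    (-((sqgVel (θ t) x).1 * pd1 (θ t) x + (sqgVel (θ t) x).2 * pd2 (θ t) x)) t

def fInt (f : V2 → ℝ) (ξ : V2) : ℂ :=
  ∫ x : V2, Complex.exp (-2 * Real.pi * Complex.I * (x.1 * ξ.1 + x.2 * ξ.2)) * (f x : ℂ)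

def hsE (s : ℝ) (f : V2 → ℝ) : ℝ≥0∞ :=
  ∫⁻ ξ : V2, ENNReal.ofReal ((1 + ξ.1 ^ 2 + ξ.2 ^ 2) ^ s * ‖fInt f ξ‖ ^ 2)

def hsN (s : ℝ) (f : V2 → ℝ) : ℝ := Real.sqrt ((hsE s f).toReal)

def MemHs (s : ℝ) (f : V2 → ℝ) : Prop := hsE s f < ⊤

def ang (x : V2) : ℝ := Complex.arg (x.1 + x.2 * Complex.I)

def vAlpha (F : V2 → ℝ) (r : ℝ) : ℝ := (sqgVel F (r, 0)).2
/-- Jordan-type bound: `sin (u/2)^2 ≥ u^2/π^2` for `|u| ≤ π`. -/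
lemma sin_half_sq_ge {u : ℝ} (h1 : -π ≤ u) (h2 : u ≤ π) :
    u ^ 2 / π ^ 2 ≤ Real.sin (u / 2) ^ 2 := by
  have hπ := Real.pi_pos
  have habs : |u / 2| ≤ π / 2 := by
    rw [abs_le]; constructor <;> linarith
  have h := Real.mul_abs_le_abs_sin habs
  have h' : (2 / π * |u / 2|) ^ 2 ≤ |Real.sin (u / 2)| ^ 2 := by
    apply pow_le_pow_left₀ (by positivity) h
  rw [sq_abs] at h'
  calc u ^ 2 / π ^ 2 = (2 / π * |u / 2|) ^ 2 := by
        rw [mul_pow, sq_abs]; field_simp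
    _ ≤ _ := h'

/-- The explicit antiderivative computation:
`∫_{-π}^{π} (d² + c₂ u²)^{-3/2} du ≤ π / (√(c₂) ... )` in the form we need. -/
lemma integral_inv_cube_bound {d c2 : ℝ} (hd : 0 < d) (hc2 : 0 < c2) :
    ∫ u in (-π)..π, 1 / Real.sqrt (d ^ 2 + c2 * u ^ 2) ^ 3 ≤
      2 * π / (d ^ 2 * Real.sqrt c2 * π) := by
  have hπ := Real.pi_pos
  set T : ℝ → ℝ := fun u => Real.sqrt (d ^ 2 + c2 * u ^ 2) with hT
  have hTpos : ∀ u, 0 < T u := fun u => Real.sqrt_pos.2 (by positivity)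
  have hT2 : ∀ u, T u ^ 2 = d ^ 2 + c2 * u ^ 2 := fun u => Real.sq_sqrt (by positivity)
  set G : ℝ → ℝ := fun u => u / (d ^ 2 * T u) with hG
  have hderiv : ∀ u ∈ Set.uIcc (-π) π, HasDerivAt G (1 / T u ^ 3) u := by
    intro u _
    have h1 : HasDerivAt (fun v : ℝ => d ^ 2 + c2 * v ^ 2) (c2 * (2 * u)) u := by
      simpa using ((hasDerivAt_pow 2 u).const_mul c2).const_add (d ^ 2)
    have h2 : HasDerivAt T (c2 * (2 * u) / (2 * T u)) u := h1.sqrt (by positivity)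
    have h3 : HasDerivAt (fun v => d ^ 2 * T v) (d ^ 2 * (c2 * (2 * u) / (2 * T u))) u :=
      h2.const_mul _
    have h4 : HasDerivAt G ((1 * (d ^ 2 * T u) - u * (d ^ 2 * (c2 * (2 * u) / (2 * T u)))) /
        (d ^ 2 * T u) ^ 2) u := (hasDerivAt_id u).div h3 (by positivity)
    convert h4 using 1
    have hTu := hT2 u
    have hTne : T u ≠ 0 := (hTpos u).ne'
    field_simp
    linear_combination (-1 : ℝ) * hT2 u
  have hcont : Continuous fun u => 1 / T u ^ 3 := by
    apply Continuous.div continuous_const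
    · exact (Real.continuous_sqrt.comp (by continuity)).pow 3
    · intro u; positivity
  have hFTC := intervalIntegral.integral_eq_sub_of_hasDerivAt hderiv
    (hcont.intervalIntegrable _ _)
  rw [hFTC]
  have hTπ : T π = T (-π) := by simp [hT]
  have hTlb : Real.sqrt c2 * π ≤ T π := by
    have : Real.sqrt (c2 * π ^ 2) ≤ T π := by
      apply Real.sqrt_le_sqrt; nlinarith
    calc Real.sqrt c2 * π = Real.sqrt (c2 * π ^ 2) := by
          rw [Real.sqrt_mul hc2.le, Real.sqrt_sq hπ.le]
      _ ≤ T π := this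
  have hTppos := hTpos π
  have hGval : G π - G (-π) = 2 * π / (d ^ 2 * T π) := by
    simp only [hG, hTπ]
    field_simp
    ring
  rw [hGval]
  apply div_le_div_of_nonneg_left (by positivity) (by positivity)
  have : 0 < Real.sqrt c2 * π := by positivity
  nlinarith [sq_nonneg d, hTlb, this]

set_option maxHeartbeats 1000000 in
/-- Main per-radius oscillatory estimate. -/
lemma oscillatory_bound (r ρ α α₀ : ℝ) (N : ℕ) (hN : 1 ≤ N) (hρ : 0 < ρ) (hρr : ρ < r) :
    |∫ β in (-π)..π, Real.sin (N * β + α₀) *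
        ((r * Real.cos α * Real.sin β - r * Real.sin α * Real.cos β) /
          Real.sqrt ((r * Real.cos α - ρ * Real.cos β) ^ 2 +
            (r * Real.sin α - ρ * Real.sin β) ^ 2) ^ 3)|
      ≤ 4 * r * π / (N * Real.sqrt (r * ρ) * (r - ρ) ^ 2) := by
  have hπ := Real.pi_pos
  have hr : 0 < r := hρ.trans hρr
  have hd : 0 < r - ρ := by linarith
  have hN0 : (0:ℝ) < N := by exact_mod_cast hN.trans_lt' (by norm_num)
  set d : ℝ := r - ρ with hd_def
  set E : ℝ → ℝ := fun β => (r * Real.cos α - ρ * Real.cos β) ^ 2 +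
      (r * Real.sin α - ρ * Real.sin β) ^ 2 with hE_def
  set n : ℝ → ℝ := fun β => r * Real.cos α * Real.sin β - r * Real.sin α * Real.cos β with hn_def
  set w : ℝ → ℝ := fun β => r * Real.cos α * Real.cos β + r * Real.sin α * Real.sin β with hw_def
  have hE_eq : ∀ β, E β = d ^ 2 + 2 * ρ * (r - w β) := by
    intro β
    have hα := Real.sin_sq_add_cos_sq α
    have hβ := Real.sin_sq_add_cos_sq β
    simp only [hE_def, hw_def, hd_def]
    linear_combination r ^ 2 * hα + ρ ^ 2 * hβ
  have hnw : ∀ β, n β ^ 2 + w β ^ 2 = r ^ 2 := by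
    intro β
    have hα := Real.sin_sq_add_cos_sq α
    have hβ := Real.sin_sq_add_cos_sq β
    simp only [hn_def, hw_def]
    linear_combination (r ^ 2 * (Real.sin β ^ 2 + Real.cos β ^ 2)) * hα + r ^ 2 * hβ
  have hw_le : ∀ β, w β ≤ r := by
    intro β
    nlinarith [hnw β, sq_nonneg (n β), sq_nonneg (w β - r), sq_nonneg (w β + r)]
  have hEpos : ∀ β, 0 < E β := by
    intro β
    rw [hE_eq β]
    nlinarith [hw_le β, hρ, hd]
  set S : ℝ → ℝ := fun β => Real.sqrt (E β) with hS_def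
  have hSpos : ∀ β, 0 < S β := fun β => Real.sqrt_pos.2 (hEpos β)
  have hS2 : ∀ β, S β ^ 2 = E β := fun β => Real.sq_sqrt (hEpos β).le
  have hSd : ∀ β, d ≤ S β := by
    intro β
    have h1 : d ^ 2 ≤ E β := by rw [hE_eq β]; nlinarith [hw_le β, hρ]
    have := Real.sqrt_le_sqrt h1
    rwa [Real.sqrt_sq hd.le] at this
  -- derivatives
  have hn' : ∀ β, HasDerivAt n (w β) β := by
    intro β
    have h1 := (Real.hasDerivAt_sin β).const_mul (r * Real.cos α)
    have h2 := (Real.hasDerivAt_cos β).const_mul (r * Real.sin α)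
    refine (h1.sub h2).congr_deriv (Eq.symm ?_)
    all_goals simp only [hw_def]
    all_goals ring
  have hE' : ∀ β, HasDerivAt E (2 * ρ * n β) β := by
    intro β
    have h1 : HasDerivAt (fun β => r * Real.cos α - ρ * Real.cos β) (ρ * Real.sin β) β := by
      have := ((Real.hasDerivAt_cos β).const_mul ρ).const_sub (r * Real.cos α)
      refine this.congr_deriv (Eq.symm ?_)
      all_goals ring
    have h2 : HasDerivAt (fun β => r * Real.sin α - ρ * Real.sin β) (-(ρ * Real.cos β)) β := by
      have := ((Real.hasDerivAt_sin β).const_mul ρ).const_sub (r * Real.sin α)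
      convert this using 1
      all_goals ring
    have := (h1.pow 2).add (h2.pow 2)
    refine this.congr_deriv (Eq.symm ?_)
    all_goals simp only [hn_def]
    all_goals push_cast
    all_goals ring
  have hS' : ∀ β, HasDerivAt S (ρ * n β / S β) β := by
    intro β
    have := (hE' β).sqrt (hEpos β).ne'
    convert this using 1
    rw [hS_def]
    field_simp
  set k : ℝ → ℝ := fun β => n β / S β ^ 3 with hk_def
  set k' : ℝ → ℝ := fun β => (w β * S β ^ 2 - 3 * ρ * n β ^ 2) / S β ^ 5 with hk'_def
  have hk : ∀ β, HasDerivAt k (k' β) β := by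
    intro β
    have h3 : HasDerivAt (fun x => S x ^ 3) (3 * S β ^ 2 * (ρ * n β / S β)) β := by
      have := (hS' β).pow 3
      refine this.congr_deriv (Eq.symm ?_)
      all_goals push_cast
      all_goals ring
    have h4 := (hn' β).div h3 (pow_ne_zero 3 (hSpos β).ne')
    refine h4.congr_deriv (Eq.symm ?_)
    have hSne := (hSpos β).ne'
    simp only [hk'_def]
    field_simp
  have hwabs : ∀ β, |w β| ≤ r := by
    intro β
    rw [abs_le]
    constructor <;> nlinarith [hnw β, sq_nonneg (n β), sq_nonneg (w β - r), sq_nonneg (w β + r)]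
  have hρn2 : ∀ β, ρ * n β ^ 2 ≤ r * S β ^ 2 := by
    intro β
    rw [hS2 β, hE_eq β]
    nlinarith [hnw β, hw_le β, mul_nonneg hρ.le (sq_nonneg (r - w β)),
      mul_nonneg (mul_nonneg hr.le hd.le) hd.le]
  have hk'b : ∀ β, |k' β| ≤ 4 * r / S β ^ 3 := by
    intro β
    have hS3 : (0:ℝ) < S β ^ 3 := pow_pos (hSpos β) 3
    have hS5 : (0:ℝ) < S β ^ 5 := pow_pos (hSpos β) 5
    rw [hk'_def, abs_div, abs_of_pos hS5, div_le_div_iff₀ hS5 hS3]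
    have hnum : |w β * S β ^ 2 - 3 * ρ * n β ^ 2| ≤ 4 * r * S β ^ 2 := by
      rw [abs_le]
      have h1 := hwabs β
      have h2 := hρn2 β
      have hS2pos : (0:ℝ) < S β ^ 2 := pow_pos (hSpos β) 2
      have h3 : |w β| * S β ^ 2 ≤ r * S β ^ 2 := mul_le_mul_of_nonneg_right h1 hS2pos.le
      have e1 : w β * S β ^ 2 ≤ r * S β ^ 2 :=
        le_trans (mul_le_mul_of_nonneg_right (le_abs_self _) hS2pos.le) h3
      have e2 : -(r * S β ^ 2) ≤ w β * S β ^ 2 := by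
        have := mul_le_mul_of_nonneg_right (neg_abs_le (w β)) hS2pos.le
        linarith
      have e3 : (0:ℝ) ≤ ρ * n β ^ 2 := mul_nonneg hρ.le (sq_nonneg _)
      have e4 : (0:ℝ) ≤ r * S β ^ 2 := by positivity
      constructor <;> linarith
    calc |w β * S β ^ 2 - 3 * ρ * n β ^ 2| * S β ^ 3 ≤ (4 * r * S β ^ 2) * S β ^ 3 :=
          mul_le_mul_of_nonneg_right hnum hS3.le
      _ = 4 * r * S β ^ 5 := by ring
  -- integration by parts
  set s : ℝ → ℝ := fun β => -Real.cos (N * β + α₀) / N with hs_def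
  have hs : ∀ β, HasDerivAt s (Real.sin (N * β + α₀)) β := by
    intro β
    have h1 : HasDerivAt (fun β : ℝ => (N:ℝ) * β + α₀) N β := by
      simpa using ((hasDerivAt_id β).const_mul (N:ℝ)).add_const α₀
    have h2 := (h1.cos.neg).div_const (N:ℝ)
    refine h2.congr_deriv (Eq.symm ?_)
    field_simp
  have hcE : Continuous E := by fun_prop
  have hcS : Continuous S := Real.continuous_sqrt.comp hcE
  have hcn : Continuous n := by fun_prop
  have hcw : Continuous w := by fun_prop
  have hcs : Continuous s := by fun_prop
  have hck' : Continuous k' := by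
    apply Continuous.div ((hcw.mul (hcS.pow 2)).sub (continuous_const.mul (hcn.pow 2)))
      (hcS.pow 5)
    exact fun β => pow_ne_zero 5 (hSpos β).ne'
  have hcsin : Continuous fun β : ℝ => Real.sin (N * β + α₀) := by fun_prop
  have hcSinv : Continuous fun β => 1 / S β ^ 3 := by
    apply Continuous.div continuous_const (hcS.pow 3)
    exact fun β => pow_ne_zero 3 (hSpos β).ne'
  have hibp := intervalIntegral.integral_mul_deriv_eq_deriv_mul (a := -π) (b := π)
    (fun β _ => hk β) (fun β _ => hs β)
    (hck'.intervalIntegrable _ _) (hcsin.intervalIntegrable _ _)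
  have hflip : (∫ β in (-π)..π, Real.sin ((N:ℝ) * β + α₀) *
      ((r * Real.cos α * Real.sin β - r * Real.sin α * Real.cos β) /
          Real.sqrt ((r * Real.cos α - ρ * Real.cos β) ^ 2 +
            (r * Real.sin α - ρ * Real.sin β) ^ 2) ^ 3)) =
      ∫ β in (-π)..π, k β * Real.sin ((N:ℝ) * β + α₀) :=
    intervalIntegral.integral_congr (fun β _ => by
      simp only [hk_def, hn_def, hS_def, hE_def]; ring)
  have hkπ : k π = k (-π) := by
    simp only [hk_def, hn_def, hS_def, hE_def, Real.sin_pi, Real.cos_pi, Real.sin_neg,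
      Real.cos_neg]
    norm_num
  have hsπ : s π = s (-π) := by
    have h0 : Real.sin ((N:ℝ) * π) = 0 := Real.sin_nat_mul_pi N
    have : Real.cos ((N:ℝ) * π + α₀) = Real.cos ((N:ℝ) * (-π) + α₀) := by
      rw [show (N:ℝ) * (-π) + α₀ = -((N:ℝ) * π) + α₀ by ring, Real.cos_add, Real.cos_add,
        Real.cos_neg, Real.sin_neg, h0]
      ring
    simp only [hs_def, this]
  rw [hflip, hibp, hkπ, hsπ]
  rw [show k (-π) * s (-π) - k (-π) * s (-π) - (∫ β in (-π)..π, k' β * s β)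
      = -∫ β in (-π)..π, k' β * s β by ring, abs_neg]
  have hsb : ∀ β, |s β| ≤ 1 / N := by
    intro β
    simp only [hs_def]
    rw [abs_div, abs_neg, abs_of_pos hN0]
    gcongr
    exact Real.abs_cos_le_one _
  have hstep1 : |∫ β in (-π)..π, k' β * s β| ≤ ∫ β in (-π)..π, |k' β * s β| :=
    intervalIntegral.abs_integral_le_integral_abs (by linarith)
  have hstep2 : (∫ β in (-π)..π, |k' β * s β|) ≤
      ∫ β in (-π)..π, (4 * r / N) * (1 / S β ^ 3) := by
    apply intervalIntegral.integral_mono_on (by linarith)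
    · exact ((hck'.mul hcs).abs).intervalIntegrable _ _
    · exact (continuous_const.mul hcSinv).intervalIntegrable _ _
    · intro β _
      rw [abs_mul]
      calc |k' β| * |s β| ≤ (4 * r / S β ^ 3) * (1 / N) :=
            mul_le_mul (hk'b β) (hsb β) (abs_nonneg _) (by positivity)
        _ = (4 * r / N) * (1 / S β ^ 3) := by ring
  rw [intervalIntegral.integral_const_mul] at hstep2
  -- periodic shift and comparison
  have hper : Function.Periodic (fun β => 1 / S β ^ 3) (2 * π) := by
    intro β
    simp only [hS_def, hE_def, Real.cos_add_two_pi, Real.sin_add_two_pi]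
  have hsh := hper.intervalIntegral_add_eq (-π) (α - π)
  rw [show -π + 2 * π = π by ring, show α - π + 2 * π = α + π by ring] at hsh
  have hcomp := intervalIntegral.integral_comp_add_right (a := -π) (b := π)
    (fun β => 1 / S β ^ 3) α
  rw [show -π + α = α - π by ring, show π + α = α + π by ring] at hcomp
  set c2 : ℝ := 4 * r * ρ / π ^ 2 with hc2_def
  have hc2 : 0 < c2 := by positivity
  have hptwise : ∀ u ∈ Set.Icc (-π) π,
      1 / S (u + α) ^ 3 ≤ 1 / Real.sqrt (d ^ 2 + c2 * u ^ 2) ^ 3 := by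
    intro u hu
    have hw' : w (u + α) = r * Real.cos u := by
      have h := Real.cos_sub (u + α) α
      rw [add_sub_cancel_right] at h
      simp only [hw_def]
      linear_combination (-r) * h
    have hsinsq := sin_half_sq_ge hu.1 hu.2
    have hhalf : Real.sin (u / 2) ^ 2 = 1 / 2 - Real.cos u / 2 := by
      have := Real.sin_sq_eq_half_sub (u / 2)
      rwa [show 2 * (u / 2) = u by ring] at this
    have hEub : d ^ 2 + c2 * u ^ 2 ≤ E (u + α) := by
      rw [hE_eq (u + α), hw']
      have h1 : c2 * u ^ 2 ≤ 4 * r * ρ * Real.sin (u / 2) ^ 2 := by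
        calc c2 * u ^ 2 = 4 * r * ρ * (u ^ 2 / π ^ 2) := by rw [hc2_def]; ring
          _ ≤ 4 * r * ρ * Real.sin (u / 2) ^ 2 :=
              mul_le_mul_of_nonneg_left hsinsq (by positivity)
      have h2 : 4 * r * ρ * Real.sin (u / 2) ^ 2 = 2 * ρ * (r - r * Real.cos u) := by
        rw [hhalf]; ring
      linarith
    have hsqle : Real.sqrt (d ^ 2 + c2 * u ^ 2) ≤ S (u + α) := Real.sqrt_le_sqrt hEub
    have h0 : (0:ℝ) < Real.sqrt (d ^ 2 + c2 * u ^ 2) := Real.sqrt_pos.2 (by positivity)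
    exact one_div_le_one_div_of_le (by positivity) (pow_le_pow_left₀ h0.le hsqle 3)
  have hintS : (∫ β in (-π)..π, 1 / S β ^ 3) ≤ 2 * π / (d ^ 2 * Real.sqrt c2 * π) := by
    rw [hsh, ← hcomp]
    calc (∫ u in (-π)..π, 1 / S (u + α) ^ 3)
        ≤ ∫ u in (-π)..π, 1 / Real.sqrt (d ^ 2 + c2 * u ^ 2) ^ 3 := by
          apply intervalIntegral.integral_mono_on (by linarith)
          · exact (hcSinv.comp (by fun_prop)).intervalIntegrable _ _
          · have : Continuous fun u : ℝ => 1 / Real.sqrt (d ^ 2 + c2 * u ^ 2) ^ 3 := by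
              apply Continuous.div continuous_const
                ((Real.continuous_sqrt.comp (by fun_prop)).pow 3)
              intro u
              have : (0:ℝ) < Real.sqrt (d ^ 2 + c2 * u ^ 2) := Real.sqrt_pos.2 (by positivity)
              exact pow_ne_zero 3 this.ne'
            exact this.intervalIntegrable _ _
          · exact hptwise
      _ ≤ 2 * π / (d ^ 2 * Real.sqrt c2 * π) := integral_inv_cube_bound hd hc2
  have hsqrtc2 : Real.sqrt c2 = 2 * Real.sqrt (r * ρ) / π := by
    rw [hc2_def, show 4 * r * ρ / π ^ 2 = (2 * Real.sqrt (r * ρ) / π) ^ 2 by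
      rw [div_pow, mul_pow, Real.sq_sqrt (by positivity)]; ring]
    exact Real.sqrt_sq (by positivity)
  have hsrρ : 0 < Real.sqrt (r * ρ) := Real.sqrt_pos.2 (by positivity)
  calc |∫ β in (-π)..π, k' β * s β| ≤ 4 * r / N * ∫ β in (-π)..π, 1 / S β ^ 3 :=
        hstep1.trans hstep2
    _ ≤ 4 * r / N * (2 * π / (d ^ 2 * Real.sqrt c2 * π)) := by
        apply mul_le_mul_of_nonneg_left hintS (by positivity)
    _ = 4 * r * π / (N * Real.sqrt (r * ρ) * (r - ρ) ^ 2) := by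
        rw [hsqrtc2, hd_def]
        have hπne : π ≠ 0 := hπ.ne'
        field_simp

set_option maxHeartbeats 1000000 in
/-- Decay of the radial component of the SQG velocity of `sin(Nα+α₀) g(r)` away from
the support of `g`. -/
theorem radial_velocity_decay :
    ∀ a b : ℝ, 0 < a → a < b → ∃ C : ℝ, 0 < C ∧
      ∀ (g : ℝ → ℝ) (M : ℝ) (N : ℕ) (α₀ : ℝ), 1 ≤ N →
        (∀ r, |g r| ≤ M) → (∀ r, g r ≠ 0 → r ∈ Set.Ioo a b) →
        ∀ x : V2, b < nrm x →
          |(x.1 * (sqgVel (fun y => Real.sin (N * ang y + α₀) * g (nrm y)) x).1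
            + x.2 * (sqgVel (fun y => Real.sin (N * ang y + α₀) * g (nrm y)) x).2) / nrm x|
            ≤ C * M / (N * (nrm x - b) ^ 2) := by
  intro a b ha hab
  have hπ := Real.pi_pos
  have hb : 0 < b := ha.trans hab
  refine ⟨4 * π * b ^ 2 * (b - a) / Real.sqrt (a * b),
    div_pos (mul_pos (by positivity) (by linarith)) (Real.sqrt_pos.2 (by positivity)), ?_⟩
  intro g M N α₀ hN hgM hsupp x hx
  set θ : V2 → ℝ := fun y => Real.sin (N * ang y + α₀) * g (nrm y) with hθ_def
  set r : ℝ := nrm x with hr_def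
  have hr0 : 0 < r := hb.trans hx
  have hrb : 0 < r - b := by linarith
  have hM : 0 ≤ M := (abs_nonneg _).trans (hgM 0)
  have hN0 : (0:ℝ) < N := by exact_mod_cast hN.trans_lt' (by norm_num)
  have hsab : 0 < Real.sqrt (a * b) := Real.sqrt_pos.2 (by positivity)
  set f : V2 → V2 := fun y =>
    (θ y / nrm (x.1 - y.1, x.2 - y.2) ^ 3) • ((-(x.2 - y.2), x.1 - y.1) : V2) with hf_def
  have hvel : sqgVel θ x = ∫ y : V2, f y := rfl
  have hRHS : 0 ≤ 4 * π * b ^ 2 * (b - a) / Real.sqrt (a * b) * M / (N * (r - b) ^ 2) := by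
    have h1 : (0:ℝ) ≤ 4 * π * b ^ 2 * (b - a) := mul_nonneg (by positivity) (by linarith)
    exact div_nonneg (mul_nonneg (div_nonneg h1 hsab.le) hM) (by positivity)
  by_cases hfi : Integrable f
  swap
  · rw [hvel, MeasureTheory.integral_undef hfi]
    simpa using hRHS
  -- the scalar integrand
  set F : V2 → ℝ := fun y =>
    θ y / nrm (x.1 - y.1, x.2 - y.2) ^ 3 * (x.1 * y.2 - x.2 * y.1) with hF_def
  set L : V2 →L[ℝ] ℝ :=
    x.1 • ContinuousLinearMap.fst ℝ ℝ ℝ + x.2 • ContinuousLinearMap.snd ℝ ℝ ℝ with hL_def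
  have hLapp : ∀ w : V2, L w = x.1 * w.1 + x.2 * w.2 := by
    intro w
    simp [hL_def, smul_eq_mul]
  have hLf : ∀ y, L (f y) = F y := by
    intro y
    rw [hf_def, hF_def]
    simp only [Prod.smul_mk, smul_eq_mul, hLapp]
    ring
  have hnum : x.1 * (sqgVel θ x).1 + x.2 * (sqgVel θ x).2 = ∫ y, F y := by
    rw [← hLapp, hvel, ← L.integral_comp_comm hfi]
    exact integral_congr_ae (Filter.Eventually.of_forall fun y => hLf y)
  have hFi : Integrable F := (L.integrable_comp hfi).congr
    (Filter.Eventually.of_forall fun y => hLf y)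
  -- polar coordinates
  have hpolar : (∫ p in polarCoord.target, p.1 • F (polarCoord.symm p)) = ∫ y, F y :=
    integral_comp_polarCoord_symm F
  -- integrability of the polar integrand
  have hB_det : ∀ p : ℝ × ℝ, (LinearMap.toContinuousLinearMap
      (Matrix.toLin (Module.Basis.finTwoProd ℝ) (Module.Basis.finTwoProd ℝ)
      !![Real.cos p.2, -p.1 * Real.sin p.2; Real.sin p.2, p.1 * Real.cos p.2])).det = p.1 := by
    intro p
    conv_rhs => rw [← one_mul p.1, ← Real.cos_sq_add_sin_sq p.2]
    simp only [neg_mul, LinearMap.det_toContinuousLinearMap, LinearMap.det_toLin,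
      Matrix.det_fin_two_of, sub_neg_eq_add]
    ring
  have hinj : Set.InjOn polarCoord.symm polarCoord.target := by
    have := polarCoord.symm.injOn
    rwa [OpenPartialHomeomorph.symm_source] at this
  have himg : polarCoord.symm '' polarCoord.target = polarCoord.source :=
    polarCoord.symm_image_target_eq_source
  have hIOimg : IntegrableOn F (polarCoord.symm '' polarCoord.target) := by
    rw [himg]; exact hFi.integrableOn
  have hIO : IntegrableOn (fun p : ℝ × ℝ => p.1 • F (polarCoord.symm p)) polarCoord.target := by
    have h2 := (integrableOn_image_iff_integrableOn_abs_det_fderiv_smul volume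
      polarCoord.open_target.measurableSet
      (fun p _ => (hasFDerivAt_polarCoord_symm p).hasFDerivWithinAt) hinj F).1 hIOimg
    apply h2.congr_fun ?_ polarCoord.open_target.measurableSet
    intro p hp
    beta_reduce
    rw [show (fderivPolarCoordSymm p).det = p.1 from hB_det p, abs_of_pos]
    exact hp.1
  -- Fubini
  have hfub : (∫ p in polarCoord.target, p.1 • F (polarCoord.symm p)) =
      ∫ ρ in Set.Ioi (0:ℝ), ∫ β in Set.Ioo (-π) π, (ρ * F (polarCoord.symm (ρ, β))) := by
    rw [polarCoord_target] at hIO ⊢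
    rw [MeasureTheory.Measure.volume_eq_prod] at hIO ⊢
    rw [MeasureTheory.setIntegral_prod _ hIO]
    simp [smul_eq_mul]
  -- per-radius bound
  have hx1 : x.1 = r * Real.cos (ang x) ∧ x.2 = r * Real.sin (ang x) := by
    have habs : ‖(x.1 + x.2 * Complex.I : ℂ)‖ = r := by
      rw [Complex.norm_def, Complex.normSq_add_mul_I]; rfl
    have hz : (x.1 + x.2 * Complex.I) ≠ 0 := by
      intro h
      rw [h] at habs
      simp only [norm_zero] at habs
      linarith
    constructor
    · rw [ang, Complex.cos_arg hz, habs]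
      have : (x.1 + x.2 * Complex.I).re = x.1 := by simp
      rw [this]
      field_simp
    · rw [ang, Complex.sin_arg, habs]
      have : (x.1 + x.2 * Complex.I).im = x.2 := by simp
      rw [this]
      field_simp
  set α : ℝ := ang x with hα_def
  set c₁ : ℝ := b ^ 2 * M * (4 * r * π / (N * Real.sqrt (a * b) * (r - b) ^ 2)) with hc₁_def
  have hc₁ : 0 ≤ c₁ := by positivity
  have hpolar_pt : ∀ ρ β : ℝ, 0 < ρ → β ∈ Set.Ioo (-π) π →
      nrm (ρ * Real.cos β, ρ * Real.sin β) = ρ ∧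
      ang (ρ * Real.cos β, ρ * Real.sin β) = β := by
    intro ρ β hρ hβ
    constructor
    · show Real.sqrt ((ρ * Real.cos β) ^ 2 + (ρ * Real.sin β) ^ 2) = ρ
      rw [show (ρ * Real.cos β) ^ 2 + (ρ * Real.sin β) ^ 2
          = ρ ^ 2 * (Real.sin β ^ 2 + Real.cos β ^ 2) by ring, Real.sin_sq_add_cos_sq,
        mul_one, Real.sqrt_sq hρ.le]
    · show Complex.arg (↑(ρ * Real.cos β) + ↑(ρ * Real.sin β) * Complex.I) = β
      have : (↑(ρ * Real.cos β) + ↑(ρ * Real.sin β) * Complex.I)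
          = ↑ρ * (Complex.cos ↑β + Complex.sin ↑β * Complex.I) := by
        rw [← Complex.ofReal_cos, ← Complex.ofReal_sin]; push_cast; ring
      rw [this]
      exact Complex.arg_mul_cos_add_sin_mul_I hρ ⟨hβ.1, hβ.2.le⟩
  have hae : ∀ ρ ∈ Set.Ioi (0:ℝ),
      ‖∫ β in Set.Ioo (-π) π, (ρ * F (polarCoord.symm (ρ, β)))‖ ≤
        Set.indicator (Set.Ioo a b) (fun _ => c₁) ρ := by
    intro ρ hρ
    by_cases hgρ : g ρ = 0
    · have hz : ∀ β ∈ Set.Ioo (-π) π, (ρ * F (polarCoord.symm (ρ, β))) = 0 := by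
        intro β hβ
        rw [polarCoord_symm_apply]
        simp only [hF_def, hθ_def]
        rw [(hpolar_pt ρ β hρ hβ).1, hgρ]
        simp
      rw [MeasureTheory.setIntegral_congr_fun measurableSet_Ioo hz]
      simp only [MeasureTheory.integral_zero, norm_zero]
      exact Set.indicator_nonneg (fun _ _ => hc₁) ρ
    · have hρab : ρ ∈ Set.Ioo a b := hsupp ρ hgρ
      rw [Set.indicator_of_mem hρab]
      have hρ0 : 0 < ρ := ha.trans hρab.1
      have hρb : ρ < b := hρab.2
      have hρr : ρ < r := hρb.trans hx
      -- rewrite the inner integral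
      have hcong : ∀ β ∈ Set.Ioo (-π) π, (ρ * F (polarCoord.symm (ρ, β)))
          = (ρ ^ 2 * g ρ) * (Real.sin (N * β + α₀) *
            ((r * Real.cos α * Real.sin β - r * Real.sin α * Real.cos β) /
              Real.sqrt ((r * Real.cos α - ρ * Real.cos β) ^ 2 +
                (r * Real.sin α - ρ * Real.sin β) ^ 2) ^ 3)) := by
        intro β hβ
        rw [polarCoord_symm_apply]
        simp only [hF_def, hθ_def]
        rw [(hpolar_pt ρ β hρ0 hβ).1, (hpolar_pt ρ β hρ0 hβ).2]
        have hnrm : nrm (x.1 - ρ * Real.cos β, x.2 - ρ * Real.sin β)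
            = Real.sqrt ((r * Real.cos α - ρ * Real.cos β) ^ 2 +
                (r * Real.sin α - ρ * Real.sin β) ^ 2) := by
          show Real.sqrt _ = _
          rw [← hx1.1, ← hx1.2]
        rw [hnrm, ← hx1.1, ← hx1.2]
        ring
      rw [MeasureTheory.setIntegral_congr_fun measurableSet_Ioo hcong,
        MeasureTheory.integral_const_mul]
      have hIoo : (∫ β in Set.Ioo (-π) π, Real.sin (N * β + α₀) *
            ((r * Real.cos α * Real.sin β - r * Real.sin α * Real.cos β) /
              Real.sqrt ((r * Real.cos α - ρ * Real.cos β) ^ 2 +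
                (r * Real.sin α - ρ * Real.sin β) ^ 2) ^ 3))
          = ∫ β in (-π)..π, Real.sin (N * β + α₀) *
            ((r * Real.cos α * Real.sin β - r * Real.sin α * Real.cos β) /
              Real.sqrt ((r * Real.cos α - ρ * Real.cos β) ^ 2 +
                (r * Real.sin α - ρ * Real.sin β) ^ 2) ^ 3) := by
        rw [intervalIntegral.integral_of_le (by linarith),
          MeasureTheory.integral_Ioc_eq_integral_Ioo]
      rw [Real.norm_eq_abs, abs_mul, hIoo]
      have hosc := oscillatory_bound r ρ α α₀ N hN hρ0 hρr
      calc |ρ ^ 2 * g ρ| * |∫ β in (-π)..π, Real.sin (N * β + α₀) *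
            ((r * Real.cos α * Real.sin β - r * Real.sin α * Real.cos β) /
              Real.sqrt ((r * Real.cos α - ρ * Real.cos β) ^ 2 +
                (r * Real.sin α - ρ * Real.sin β) ^ 2) ^ 3)|
          ≤ (b ^ 2 * M) * (4 * r * π / (N * Real.sqrt (r * ρ) * (r - ρ) ^ 2)) := by
            apply mul_le_mul _ hosc (abs_nonneg _) (by positivity)
            rw [abs_mul, abs_pow, abs_of_pos hρ0]
            apply mul_le_mul _ (hgM ρ) (abs_nonneg _) (by positivity)
            apply pow_le_pow_left₀ hρ0.le hρb.le
        _ ≤ c₁ := by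
            rw [hc₁_def]
            apply mul_le_mul_of_nonneg_left _ (by positivity)
            have h1 : Real.sqrt (a * b) ≤ Real.sqrt (r * ρ) := by
              apply Real.sqrt_le_sqrt
              have e1 : a * b < ρ * b := mul_lt_mul_of_pos_right hρab.1 hb
              have e2 : ρ * b < ρ * r := mul_lt_mul_of_pos_left hx hρ0
              nlinarith
            have h2 : (r - b) ^ 2 ≤ (r - ρ) ^ 2 := by nlinarith
            gcongr
  -- bound the outer integral
  have hbd_int : Integrable (Set.indicator (Set.Ioo a b) (fun _ => c₁))
      (MeasureTheory.volume.restrict (Set.Ioi (0:ℝ))) := by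
    apply MeasureTheory.Integrable.restrict
    rw [MeasureTheory.integrable_indicator_iff measurableSet_Ioo]
    exact (MeasureTheory.integrableOn_const_iff (C := c₁)).2 (Or.inr measure_Ioo_lt_top)
  have hbd_val : (∫ ρ in Set.Ioi (0:ℝ), Set.indicator (Set.Ioo a b) (fun _ => c₁) ρ)
      ≤ c₁ * (b - a) := by
    have hsub : Set.Ioo a b ∩ Set.Ioi 0 = Set.Ioo a b :=
      Set.inter_eq_left.2 (fun y (hy : y ∈ Set.Ioo a b) => lt_trans ha hy.1)
    rw [MeasureTheory.integral_indicator measurableSet_Ioo,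
      MeasureTheory.Measure.restrict_restrict measurableSet_Ioo, hsub,
      MeasureTheory.setIntegral_const, Real.volume_real_Ioo, smul_eq_mul,
      max_eq_left (by linarith)]
    ring_nf
    exact le_refl _
  have houter : ‖∫ ρ in Set.Ioi (0:ℝ), ∫ β in Set.Ioo (-π) π,
      (ρ * F (polarCoord.symm (ρ, β)))‖ ≤ c₁ * (b - a) := by
    refine (MeasureTheory.norm_integral_le_of_norm_le hbd_int ?_).trans hbd_val
    rw [MeasureTheory.ae_restrict_iff' measurableSet_Ioi]
    exact Filter.Eventually.of_forall hae
  -- conclude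
  rw [abs_div, abs_of_pos hr0, hnum, ← hpolar, hfub]
  rw [Real.norm_eq_abs] at houter
  calc |∫ ρ in Set.Ioi (0:ℝ), ∫ β in Set.Ioo (-π) π, (ρ * F (polarCoord.symm (ρ, β)))| / r
      ≤ c₁ * (b - a) / r := by
        gcongr
    _ ≤ 4 * π * b ^ 2 * (b - a) / Real.sqrt (a * b) * M / (N * (r - b) ^ 2) := by
        rw [hc₁_def]
        apply le_of_eq
        field_simp
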